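/- Fix n ≥ 1, injective ρ-functions ρ^{(k)} for 1 ≤ k ≤ n, and the derived functions f_i (i ≤ n) on increasing tuples from ω_n as defined from the ρ^{(k)}. Let B_n be the family of all finite subsets s of ω_n such that the restriction of f_n to increasing (n+1)-tuples from s is min-dependant and, for every i < n, the restriction of f_i to increasing (i+1)-tuples from s is shift-increasing. Then: (i) B_n is a very-large family of finite subsets of ω_n; and (ii) whenever s ≠ t are in B_n, |s| = |t|, and f_n(s[I]) = f_n(t[I]) for every (n+1)-element subset I of {0, 1, …, |s|−1} (where s[I] denotes the image of I under the increasing enumeration of s), the sets s and t are in (2n−1)-Δ-position. -/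

import Mathlib

/-- `ω_k` as an ordinal (`ω_0 = ω`). -/
noncomputable def omegaOrd (k : ℕ) : Ordinal := (Cardinal.aleph k).ord

/-- A system of injective ρ-functions: for each `1 ≤ k ≤ n`, `ρ k` is symmetric on
distinct ordinals below `ω_k`, takes values below `ω_{k-1}`, and satisfies (a)
subadditivity, (b) injectivity in the first coordinate, and (c) `ρ(α,β) ≠ ρ(β,γ)`. -/
def IsRhoSystem (n : ℕ) (ρ : ℕ → Ordinal → Ordinal → Ordinal) : Prop :=
  ∀ k : ℕ, 1 ≤ k → k ≤ n →
    (∀ α β, α < omegaOrd k → β < omegaOrd k → α ≠ β → ρ k α β = ρ k β α) ∧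
    (∀ α β, α < omegaOrd k → β < omegaOrd k → α ≠ β → ρ k α β < omegaOrd (k - 1)) ∧
    (∀ α β γ, α < β → β < γ → γ < omegaOrd k →
      ρ k α β ≤ max (ρ k α γ) (ρ k β γ) ∧ ρ k α γ ≤ max (ρ k α β) (ρ k β γ)) ∧
    (∀ α α' β, α < β → α' < β → β < omegaOrd k → α ≠ α' → ρ k α β ≠ ρ k α' β) ∧
    (∀ α β γ, α < β → β < γ → γ < omegaOrd k → ρ k α β ≠ ρ k β γ)

/-- The functions `f_i` derived from the ρ-functions: `f_0(α) = α` and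
`f_{i+1}(α_0,…,α_{i+1}) = ρ^{(n-i)}(f_i(α_0,…,α_i), f_i(α_1,…,α_{i+1}))`
(with value `0` if the two arguments coincide).  A tuple `(α_0,…,α_i)` is
represented by a function `v : ℕ → Ordinal` via its first `i + 1` values. -/
noncomputable def fseq (n : ℕ) (ρ : ℕ → Ordinal → Ordinal → Ordinal) :
    ℕ → (ℕ → Ordinal) → Ordinal
  | 0, v => v 0
  | (i + 1), v =>
      if fseq n ρ i v = fseq n ρ i (fun j => v (j + 1)) then 0
      else ρ (n - i) (fseq n ρ i v) (fseq n ρ i (fun j => v (j + 1)))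


/-- `s < t` for finite sets of ordinals. -/
def BlkLt (s t : Finset Ordinal) : Prop := ∀ a ∈ s, ∀ b ∈ t, a < b

/-- `s ⊑ t` : `s` is an initial part of `t`. -/
def InitSeg (s t : Finset Ordinal) : Prop := s ⊆ t ∧ BlkLt s (t \ s)

/-- `A` and `B` are in `m`-Δ-position. -/
def DeltaPos (m : ℕ) (A B : Finset Ordinal) : Prop :=
  ∃ I J : Finset Ordinal, I ⊆ A ∩ B ∧ J ⊆ A ∩ B ∧ BlkLt I J ∧
    A ∩ B = I ∪ J ∧ J.card ≤ m ∧ InitSeg I A ∧ InitSeg I B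

/-- A very-large family of finite subsets of the ordinals below `κo`. -/
def VeryLarge (κo : Ordinal) (B : Set (Finset Ordinal)) : Prop :=
  ∀ A : Set Ordinal, A ⊆ Set.Iio κo → A.Infinite →
    ∃ A' ⊆ A, A'.Infinite ∧ ∀ s : Finset Ordinal, ↑s ⊆ A' → s ∈ B

/-- The `j`-th element of the finite set `s` in increasing order (`0` if out of range). -/
noncomputable def enumOf (s : Finset Ordinal) (j : ℕ) : Ordinal :=
  (s.sort (· ≤ ·)).getD j 0

/-- Membership in the family `B_n`: all elements below `ω_n`, `f_n` is min-dependant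
on increasing `(n+1)`-tuples from `s`, and `f_i` is shift-increasing on `s` for `i < n`. -/
def memBn (n : ℕ) (ρ : ℕ → Ordinal → Ordinal → Ordinal) (s : Finset Ordinal) : Prop :=
  (∀ a ∈ s, a < omegaOrd n) ∧
  (∀ v w : ℕ → Ordinal,
    (∀ j, j ≤ n → v j ∈ s) → (∀ j, j < n → v j < v (j + 1)) →
    (∀ j, j ≤ n → w j ∈ s) → (∀ j, j < n → w j < w (j + 1)) →
    fseq n ρ n v = fseq n ρ n w → v 0 = w 0) ∧
  (∀ i < n, ∀ v : ℕ → Ordinal,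
    (∀ j, j ≤ i + 1 → v j ∈ s) → (∀ j, j < i + 1 → v j < v (j + 1)) →
    fseq n ρ i v < fseq n ρ i (fun j => v (j + 1)))

/-!
(i) Enumerate an infinite `A ⊆ ω_n` increasingly and apply Ramsey's theorem to the colouring of
`(2n+2)`-tuples that records, for each `i < n`, whether `f_i` increases under the shift, and, for
each placement of two `(n+1)`-tuples inside the `(2n+2)`-tuple, whether `f_n` agrees on them.
Along the homogeneous subsequence, `f_i` on consecutive windows never repeats a value by (c), so by
well-foundedness it increases somewhere, hence everywhere. If `f_n(v) = f_n(w)` with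
`min v < min w`, homogeneity lets us move `min v` without moving `w` or `f_n(v)`; but by (b) a
change of the first entry alone changes `f_n`.

(ii) Let `K` be the first position where `s` and `t` differ, and `I = s[<K] = t[<K]`. Fewer than
`n` positions above `K` carry the same element in `s` and `t`, since otherwise `K` together with
`n` of them gives two tuples differing only in their first entry with the same `f_n`; and at most
`n` common elements sit at different positions, since otherwise min-dependence fails in `t`.
So `|(s ∩ t) \ I| ≤ (n - 1) + n`.
-/

theorem exists_strictMono_fusion {P : ℕ → Set ℕ → Prop}
    (hP : ∀ h T T', T' ⊆ T → P h T → P h T')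
    (step : ∀ S : Set ℕ, S.Infinite → ∃ T ⊆ S \ Set.Iic (sInf S), T.Infinite ∧ P (sInf S) T)
    {p : Set ℕ} (hp : p.Infinite) :
    ∃ x : ℕ → ℕ, StrictMono x ∧ (∀ k, x k ∈ p) ∧ ∀ k, P (x k) (x '' Set.Ioi k) := by
  choose T hTsub hTinf hPT using step
  let S : ℕ → {S : Set ℕ // S.Infinite} :=
    fun k => Nat.rec ⟨p, hp⟩ (fun _ S => ⟨T S.1 S.2, hTinf S.1 S.2⟩) k
  have hS_succ : ∀ k, (S (k + 1)).1 ⊆ (S k).1 \ Set.Iic (sInf (S k).1) := fun k => hTsub _ _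
  have hS_anti : Antitone fun k => (S k).1 :=
    antitone_nat_of_succ_le fun k => (hS_succ k).trans Set.sdiff_subset
  have hx_mem : ∀ k, sInf (S k).1 ∈ (S k).1 := fun k => Nat.sInf_mem (S k).2.nonempty
  have hx_tail : ∀ k l, k < l → sInf (S l).1 ∈ (S (k + 1)).1 := fun k l hkl =>
    hS_anti (Nat.succ_le_of_lt hkl) (hx_mem l)
  refine ⟨fun k => sInf (S k).1, fun k l hkl => ?_, fun k => hS_anti (Nat.zero_le k) (hx_mem k),
    fun k => hP _ _ _ ?_ (hPT _ (S k).2)⟩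
  · simpa using (hS_succ k (hx_tail k l hkl)).2
  · rintro _ ⟨l, hkl, rfl⟩
    exact hx_tail k l hkl

theorem exists_infinite_homogeneous {C : Type*} [Finite C] (M : ℕ) (c : (ℕ → ℕ) → C)
    (hc : ∀ x y : ℕ → ℕ, (∀ j < M, x j = y j) → c x = c y) {p : Set ℕ} (hp : p.Infinite) :
    ∃ q ⊆ p, q.Infinite ∧ ∃ a, ∀ x : ℕ → ℕ, StrictMono x → (∀ j, x j ∈ q) → c x = a := by
  induction M generalizing c p with
  | zero => exact ⟨p, subset_rfl, hp, c id, fun x _ _ => hc x id (by simp)⟩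
  | succ M ih =>
    let cons : ℕ → (ℕ → ℕ) → ℕ → ℕ := fun h y j => if j = 0 then h else y (j - 1)
    have hcons : ∀ h y y', (∀ j < M, y j = y' j) → c (cons h y) = c (cons h y') :=
      fun h y y' hyy' => hc _ _ fun j hj => by
        by_cases hj0 : j = 0
        · simp [cons, hj0]
        · simp only [cons, hj0, if_false]; exact hyy' _ (by omega)
    obtain ⟨x, hx, hxp, hxP⟩ := exists_strictMono_fusion
      (P := fun h T => ∃ a, ∀ y, StrictMono y → (∀ j, y j ∈ T) → c (cons h y) = a)
      (fun _ _ _ hT ⟨a, ha⟩ => ⟨a, fun y hy hyT => ha y hy fun j => hT (hyT j)⟩)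
      (fun S hS => ih _ (hcons (sInf S)) (hS.sdiff (Set.finite_Iic _))) hp
    choose a ha using hxP
    obtain ⟨b, hb⟩ := Finite.exists_infinite_fiber a
    refine ⟨x '' (a ⁻¹' {b}), ?_, (Set.infinite_coe_iff.mp hb).image hx.injective.injOn, b, ?_⟩
    · rintro _ ⟨k, -, rfl⟩
      exact hxp k
    · intro z hz hzq
      obtain ⟨k, hk, hzk⟩ := hzq 0
      have hz_cons : z = cons (x k) (fun j => z (j + 1)) := by
        funext j
        by_cases hj0 : j = 0
        · simp [cons, hj0, hzk]
        · simp only [cons, hj0, if_false]; congr 1; omega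
      rw [hz_cons, ha k (fun j => z (j + 1)) (fun _ _ h => hz (Nat.succ_lt_succ h)), hk]
      intro j
      obtain ⟨l, -, hzl⟩ := hzq (j + 1)
      refine ⟨l, ?_, hzl⟩
      have : x k < x l := by rw [hzk, hzl]; exact hz (Nat.succ_pos j)
      exact hx.lt_iff_lt.mp this

def IsHomogeneousFor {α : Type*} (e : ℕ → α) (Φ : (ℕ → α) → Prop) : Prop :=
  ∀ x y : ℕ → ℕ, StrictMono x → StrictMono y → (Φ (e ∘ x) ↔ Φ (e ∘ y))

theorem exists_strictMono_isHomogeneousFor {α ι : Type*} [Finite ι] (M : ℕ)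
    (Φ : ι → (ℕ → α) → Prop) (hΦ : ∀ k u u', (∀ j < M, u j = u' j) → (Φ k u ↔ Φ k u'))
    (e : ℕ → α) : ∃ φ : ℕ → ℕ, StrictMono φ ∧ ∀ k, IsHomogeneousFor (e ∘ φ) (Φ k) := by
  obtain ⟨q, -, hq, a, ha⟩ := exists_infinite_homogeneous M (fun x k => Φ k (e ∘ x))
    (fun x y hxy => funext fun k => propext (hΦ k _ _ fun j hj => congrArg e (hxy j hj)))
    Set.infinite_univ
  have hφ : StrictMono (Nat.nth (· ∈ q)) := Nat.nth_strictMono hq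
  have hcol : ∀ x, StrictMono x → (fun k => Φ k (e ∘ (Nat.nth (· ∈ q) ∘ x))) = a := fun x hx =>
    ha _ (hφ.comp hx) fun j => Nat.nth_mem_of_infinite hq _
  exact ⟨_, hφ, fun k x y hx hy => by
    rw [Function.comp_assoc, Function.comp_assoc]
    exact (congrFun (hcol x hx) k).to_iff.trans (congrFun (hcol y hy) k).to_iff.symm⟩

theorem Set.Infinite.exists_strictMono_mem {α : Type*} [LinearOrder α] [WellFoundedLT α]
    {A : Set α} (hA : A.Infinite) : ∃ e : ℕ → α, StrictMono e ∧ ∀ k, e k ∈ A := by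
  have := hA.to_subtype
  obtain ⟨f, hf | hf⟩ := Infinite.exists_strictMono_or_strictAnti A
  · exact ⟨fun k => f k, hf, fun k => (f k).2⟩
  · exact (not_strictAnti_of_wellFoundedLT f hf).elim

theorem exists_lt_succ_of_ne_succ {α : Type*} [LinearOrder α] [WellFoundedLT α] {W : ℕ → α}
    (h : ∀ k, W k ≠ W (k + 1)) : ∃ k, W k < W (k + 1) := by
  by_contra! hW
  exact not_strictAnti_of_wellFoundedLT W
    (strictAnti_nat_of_succ_lt fun k => (hW k).lt_of_ne (h k).symm)

theorem omegaOrd_pos (k : ℕ) : 0 < omegaOrd k := by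
  rw [omegaOrd, Cardinal.lt_ord]
  simpa using Cardinal.aleph_pos k

namespace IsRhoSystem

variable {n k : ℕ} {ρ : ℕ → Ordinal → Ordinal → Ordinal}

theorem lt_omegaOrd (hρ : IsRhoSystem n ρ) (hk : 1 ≤ k) (hkn : k ≤ n) {α β : Ordinal}
    (hα : α < omegaOrd k) (hβ : β < omegaOrd k) (hαβ : α ≠ β) : ρ k α β < omegaOrd (k - 1) :=
  (hρ k hk hkn).2.1 α β hα hβ hαβ

theorem ne_of_ne_left (hρ : IsRhoSystem n ρ) (hk : 1 ≤ k) (hkn : k ≤ n) {α α' β : Ordinal}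
    (hα : α < β) (hα' : α' < β) (hβ : β < omegaOrd k) (hne : α ≠ α') : ρ k α β ≠ ρ k α' β :=
  (hρ k hk hkn).2.2.2.1 α α' β hα hα' hβ hne

theorem ne_of_lt_of_lt (hρ : IsRhoSystem n ρ) (hk : 1 ≤ k) (hkn : k ≤ n) {α β γ : Ordinal}
    (hαβ : α < β) (hβγ : β < γ) (hγ : γ < omegaOrd k) : ρ k α β ≠ ρ k β γ :=
  (hρ k hk hkn).2.2.2.2 α β γ hαβ hβγ hγ

end IsRhoSystem

def IsIncrTuple (S : Set Ordinal) (m : ℕ) (v : ℕ → Ordinal) : Prop :=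
  (∀ j ≤ m, v j ∈ S) ∧ ∀ j < m, v j < v (j + 1)

theorem IsIncrTuple.of_le {S : Set Ordinal} {m k : ℕ} {v : ℕ → Ordinal} (hv : IsIncrTuple S m v)
    (hk : k ≤ m) : IsIncrTuple S k v :=
  ⟨fun j hj => hv.1 j (hj.trans hk), fun j hj => hv.2 j (hj.trans_le hk)⟩

theorem IsIncrTuple.mono {S T : Set Ordinal} {m : ℕ} {v : ℕ → Ordinal} (hv : IsIncrTuple S m v)
    (hST : S ⊆ T) : IsIncrTuple T m v :=
  ⟨fun j hj => hST (hv.1 j hj), hv.2⟩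

section Fseq

variable {n : ℕ} {ρ : ℕ → Ordinal → Ordinal → Ordinal}

def ShiftLt (n : ℕ) (ρ : ℕ → Ordinal → Ordinal → Ordinal) (i : ℕ) (v : ℕ → Ordinal) : Prop :=
  fseq n ρ i v < fseq n ρ i (fun j => v (j + 1))

def ShiftIncreasingOn (n : ℕ) (ρ : ℕ → Ordinal → Ordinal → Ordinal) (i : ℕ)
    (S : Set Ordinal) : Prop :=
  ∀ v, IsIncrTuple S (i + 1) v → ShiftLt n ρ i v

def MinDependentOn (n : ℕ) (ρ : ℕ → Ordinal → Ordinal → Ordinal) (S : Set Ordinal) : Prop :=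
  ∀ v w, IsIncrTuple S n v → IsIncrTuple S n w → fseq n ρ n v = fseq n ρ n w → v 0 = w 0

theorem memBn_iff {s : Finset Ordinal} :
    memBn n ρ s ↔ (∀ a ∈ s, a < omegaOrd n) ∧ MinDependentOn n ρ s ∧
      ∀ i < n, ShiftIncreasingOn n ρ i s :=
  ⟨fun ⟨hlt, hmd, hsi⟩ => ⟨hlt, fun v w hv hw => hmd v w hv.1 hv.2 hw.1 hw.2,
      fun i hi v hv => hsi i hi v hv.1 hv.2⟩,
    fun ⟨hlt, hmd, hsi⟩ => ⟨hlt, fun v w hv hvi hw hwi => hmd v w ⟨hv, hvi⟩ ⟨hw, hwi⟩,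
      fun i hi v hv hvi => hsi i hi v ⟨hv, hvi⟩⟩⟩

theorem shiftIncreasingOn_zero (S : Set Ordinal) : ShiftIncreasingOn n ρ 0 S :=
  fun _ hv => hv.2 0 Nat.zero_lt_one

theorem ShiftIncreasingOn.mono {i : ℕ} {S T : Set Ordinal} (h : ShiftIncreasingOn n ρ i T)
    (hST : S ⊆ T) : ShiftIncreasingOn n ρ i S :=
  fun v hv => h v (hv.mono hST)

theorem MinDependentOn.mono {S T : Set Ordinal} (h : MinDependentOn n ρ T) (hST : S ⊆ T) :
    MinDependentOn n ρ S :=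
  fun v w hv hw => h v w (hv.mono hST) (hw.mono hST)

theorem shiftLt_of_isIncrTuple {S : Set Ordinal} (hS : ∀ i < n, ShiftIncreasingOn n ρ i S)
    {v : ℕ → Ordinal} (hv : IsIncrTuple S n v) : ∀ i < n, ShiftLt n ρ i v :=
  fun i hi => hS i hi v (hv.of_le hi)

theorem fseq_congr {i : ℕ} {v w : ℕ → Ordinal} (h : ∀ j ≤ i, v j = w j) :
    fseq n ρ i v = fseq n ρ i w := by
  induction i generalizing v w with
  | zero => exact h 0 le_rfl
  | succ i ih =>
    simp only [fseq, ih fun j hj => h j (by omega), ih fun j hj => h (j + 1) (by omega)]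

theorem shiftLt_congr {i : ℕ} {v w : ℕ → Ordinal} (h : ∀ j ≤ i + 1, v j = w j) :
    ShiftLt n ρ i v ↔ ShiftLt n ρ i w := by
  rw [ShiftLt, ShiftLt, fseq_congr fun j hj => h j (by omega),
    fseq_congr fun j hj => h (j + 1) (by omega)]

theorem fseq_succ_of_shiftLt {i : ℕ} {v : ℕ → Ordinal} (h : ShiftLt n ρ i v) :
    fseq n ρ (i + 1) v = ρ (n - i) (fseq n ρ i v) (fseq n ρ i fun j => v (j + 1)) := by
  rw [fseq, if_neg h.ne]

theorem fseq_lt_omegaOrd (hρ : IsRhoSystem n ρ) {i : ℕ} (hi : i ≤ n) {v : ℕ → Ordinal}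
    (hv : ∀ j ≤ i, v j < omegaOrd n) : fseq n ρ i v < omegaOrd (n - i) := by
  induction i generalizing v with
  | zero => exact hv 0 le_rfl
  | succ i ih =>
    have h₁ := ih (by omega) fun j hj => hv j (by omega)
    have h₂ := ih (by omega) fun j hj => hv (j + 1) (by omega)
    rw [fseq]
    split_ifs with h
    · exact omegaOrd_pos _
    · rw [show n - (i + 1) = n - i - 1 by omega]
      exact hρ.lt_omegaOrd (by omega) (by omega) h₁ h₂ h

theorem fseq_succ_ne_shift (hρ : IsRhoSystem n ρ) {i : ℕ} (hi : i < n) {v : ℕ → Ordinal}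
    (hv : ∀ j ≤ i + 2, v j < omegaOrd n) (h₁ : ShiftLt n ρ i v)
    (h₂ : ShiftLt n ρ i fun j => v (j + 1)) :
    fseq n ρ (i + 1) v ≠ fseq n ρ (i + 1) fun j => v (j + 1) := by
  rw [fseq_succ_of_shiftLt h₁, fseq_succ_of_shiftLt h₂]
  exact hρ.ne_of_lt_of_lt (by omega) (by omega) h₁ h₂
    (fseq_lt_omegaOrd hρ hi.le fun j hj => hv (j + 1 + 1) (by omega))

theorem fseq_ne_of_head_ne (hρ : IsRhoSystem n ρ) {v w : ℕ → Ordinal}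
    (htail : ∀ j, 0 < j → j ≤ n → v j = w j) (hhead : v 0 ≠ w 0)
    (hv_lt : ∀ j ≤ n, v j < omegaOrd n) (hv : ∀ i < n, ShiftLt n ρ i v)
    (hw : ∀ i < n, ShiftLt n ρ i w) : fseq n ρ n v ≠ fseq n ρ n w := by
  suffices ∀ i ≤ n, fseq n ρ i v ≠ fseq n ρ i w from this n le_rfl
  intro i hi
  induction i with
  | zero => exact hhead
  | succ i ih =>
    have htail' : (fseq n ρ i fun j => v (j + 1)) = fseq n ρ i fun j => w (j + 1) :=
      fseq_congr fun j hj => htail (j + 1) (by omega) (by omega)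
    have hw' := hw i (by omega)
    rw [ShiftLt, ← htail'] at hw'
    rw [fseq_succ_of_shiftLt (hv i (by omega)), fseq_succ_of_shiftLt (hw i (by omega)), ← htail']
    exact hρ.ne_of_ne_left (by omega) (by omega) (hv i (by omega)) hw'
      (fseq_lt_omegaOrd hρ (by omega) fun j hj => hv_lt (j + 1) (by omega)) (ih (by omega))

end Fseq

theorem IsIncrTuple.exists_strictMono_index {e : ℕ → Ordinal} (he : StrictMono e) {m : ℕ}
    {v : ℕ → Ordinal} (hv : IsIncrTuple (Set.range e) m v) :
    ∃ y : ℕ → ℕ, StrictMono y ∧ ∀ j ≤ m, v j = e (y j) := by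
  choose! y hy using hv.1
  refine ⟨fun j => if j ≤ m then y j else y m + (j - m), strictMono_nat_of_lt_succ fun j => ?_,
    fun j hj => by simp [hj, hy j hj]⟩
  rcases lt_trichotomy j m with h | rfl | h
  · simp only [h.le, Nat.succ_le_of_lt h, if_true]
    rw [← he.lt_iff_lt, hy j h.le, hy (j + 1) h]
    exact hv.2 j h
  · simp
  · simp only [show ¬j ≤ m by omega, show ¬j + 1 ≤ m by omega, if_false]
    omega

theorem Finset.exists_strictMono_image_Iio_card (U : Finset ℕ) :
    ∃ x : ℕ → ℕ, StrictMono x ∧ x '' Set.Iio U.card = U := by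
  let x : ℕ → ℕ := fun k =>
    if h : k < U.card then U.orderEmbOfFin rfl ⟨k, h⟩ else U.sup id + 1 + k
  have hx_lt : ∀ k (h : k < U.card), x k = U.orderEmbOfFin rfl ⟨k, h⟩ := fun k h => dif_pos h
  refine ⟨x, strictMono_nat_of_lt_succ fun k => ?_, ?_⟩
  · by_cases h : k + 1 < U.card
    · rw [hx_lt k (by omega), hx_lt (k + 1) h]
      exact (U.orderEmbOfFin rfl).strictMono (Fin.mk_lt_mk.2 k.lt_succ_self)
    · have hx_succ : x (k + 1) = U.sup id + 1 + (k + 1) := dif_neg h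
      by_cases hk : k < U.card
      · rw [hx_lt k hk, hx_succ]
        have := Finset.le_sup (f := id) (U.orderEmbOfFin_mem rfl ⟨k, hk⟩)
        simp only [id] at this
        omega
      · rw [show x k = U.sup id + 1 + k from dif_neg hk, hx_succ]
        omega
  · ext u
    constructor
    · rintro ⟨k, hk, rfl⟩
      rw [hx_lt k hk]
      exact U.orderEmbOfFin_mem rfl _
    · intro hu
      rw [← U.range_orderEmbOfFin rfl] at hu
      obtain ⟨⟨k, hk⟩, rfl⟩ := hu
      exact ⟨k, hk, hx_lt k hk⟩

theorem exists_strictMono_merge {m M : ℕ} (hM : 2 * (m + 1) ≤ M) (y z : ℕ → ℕ) :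
    ∃ x : ℕ → ℕ, StrictMono x ∧ ∃ P Q : Fin (m + 1) → Fin M,
      ∀ j ≤ m, x (P (Fin.ofNat _ j)) = y j ∧ x (Q (Fin.ofNat _ j)) = z j := by
  let U := (Finset.range (m + 1)).image y ∪ (Finset.range (m + 1)).image z
  have hU : U.card ≤ M := calc
    U.card ≤ m + 1 + (m + 1) := (Finset.card_union_le _ _).trans
      (add_le_add (Finset.card_image_le.trans (by simp)) (Finset.card_image_le.trans (by simp)))
    _ ≤ M := by omega
  obtain ⟨x, hx, hxU⟩ := U.exists_strictMono_image_Iio_card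
  have hpos : ∀ u ∈ U, ∃ k : Fin M, x k = u := fun u hu => by
    obtain ⟨k, hk, rfl⟩ : u ∈ x '' Set.Iio U.card := hxU ▸ hu
    exact ⟨⟨k, lt_of_lt_of_le hk hU⟩, rfl⟩
  choose P hP using fun i : Fin (m + 1) =>
    hpos (y i) (Finset.mem_union_left _ (Finset.mem_image_of_mem y (Finset.mem_range.2 i.2)))
  choose Q hQ using fun i : Fin (m + 1) =>
    hpos (z i) (Finset.mem_union_right _ (Finset.mem_image_of_mem z (Finset.mem_range.2 i.2)))
  refine ⟨x, hx, P, Q, fun j hj => ⟨?_, ?_⟩⟩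
  · rw [hP, Fin.val_ofNat, Nat.mod_eq_of_lt (by omega)]
  · rw [hQ, Fin.val_ofNat, Nat.mod_eq_of_lt (by omega)]

section VeryLarge

variable {n : ℕ} {ρ : ℕ → Ordinal → Ordinal → Ordinal}

theorem shiftIncreasingOn_range_of_isHomogeneousFor {i : ℕ} {e : ℕ → Ordinal}
    (he : StrictMono e) (hom : IsHomogeneousFor e (ShiftLt n ρ i)) {x : ℕ → ℕ}
    (hx : StrictMono x) (hlt : ShiftLt n ρ i (e ∘ x)) :
    ShiftIncreasingOn n ρ i (Set.range e) := by
  intro v hv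
  obtain ⟨y, hy, hyv⟩ := hv.exists_strictMono_index he
  exact (shiftLt_congr fun j hj => (hyv j hj).symm).mp ((hom x y hx hy).mp hlt)

theorem shiftIncreasingOn_range (hρ : IsRhoSystem n ρ) {e : ℕ → Ordinal} (he : StrictMono e)
    (he_lt : ∀ k, e k < omegaOrd n) (hom : ∀ i < n, IsHomogeneousFor e (ShiftLt n ρ i)) :
    ∀ i < n, ShiftIncreasingOn n ρ i (Set.range e) := by
  intro i hi
  induction i with
  | zero => exact shiftIncreasingOn_zero _
  | succ i ih =>
    have hSI := ih (by omega)
    let win : ℕ → ℕ → Ordinal := fun k j => e (k + j)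
    have hwin : ∀ k, IsIncrTuple (Set.range e) (i + 1) (win k) :=
      fun k => ⟨fun j _ => ⟨_, rfl⟩, fun j _ => he (by omega)⟩
    have hshift : ∀ k, (fun j => win k (j + 1)) = win (k + 1) :=
      fun k => funext fun j => congrArg e (by omega)
    obtain ⟨k, hk⟩ := exists_lt_succ_of_ne_succ (W := fun k => fseq n ρ (i + 1) (win k)) fun k => by
      have := fseq_succ_ne_shift hρ (by omega) (v := win k) (fun j _ => he_lt _)
        (hSI _ (hwin k)) (by rw [hshift]; exact hSI _ (hwin (k + 1)))
      rwa [hshift] at this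
    refine shiftIncreasingOn_range_of_isHomogeneousFor he (hom _ hi) (x := (k + ·))
      (fun _ _ h => by simpa using h) ?_
    change ShiftLt n ρ (i + 1) (win k)
    rw [ShiftLt, hshift]
    exact hk

def FseqPatternEq (n : ℕ) (ρ : ℕ → Ordinal → Ordinal → Ordinal) {M : ℕ}
    (P Q : Fin (n + 1) → Fin M) (u : ℕ → Ordinal) : Prop :=
  fseq n ρ n (fun j => u (P (Fin.ofNat _ j))) = fseq n ρ n (fun j => u (Q (Fin.ofNat _ j)))

theorem not_fseqPatternEq_of_head_unshared (hρ : IsRhoSystem n ρ) {e : ℕ → Ordinal}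
    (he : StrictMono e) (he_lt : ∀ k, e k < omegaOrd n)
    (hSI : ∀ i < n, ShiftIncreasingOn n ρ i (Set.range e)) {M : ℕ} {P Q : Fin (n + 1) → Fin M}
    (hom : IsHomogeneousFor e (FseqPatternEq n ρ P Q))
    (hP : ∀ j < n, (P (Fin.ofNat _ j) : ℕ) < P (Fin.ofNat _ (j + 1)))
    (hQ : ∀ j ≤ n, (Q (Fin.ofNat _ j) : ℕ) ≠ P (Fin.ofNat _ 0)) {x : ℕ → ℕ} (hx : StrictMono x) :
    ¬FseqPatternEq n ρ P Q (e ∘ x) := by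
  intro hx_pat
  set p : ℕ → ℕ := fun j => P (Fin.ofNat _ j)
  set q : ℕ → ℕ := fun j => Q (Fin.ofNat _ j)
  have hp0 : ∀ j, 0 < j → j ≤ n → p 0 < p j := fun j hj hjn =>
    strictMonoOn_Iic_of_lt_succ hP (Set.mem_Iic.2 (Nat.zero_le n)) hjn hj
  -- Realise the pattern by `k ↦ 2 k`, and by the same map with `2 k + 1` in the slot `p 0`: the
  -- second tuple does not see the change, the first one only in its first entry.
  let d : ℕ → ℕ := fun k => 2 * k
  let d' : ℕ → ℕ := fun k => if k = p 0 then 2 * k + 1 else 2 * k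
  have hd : StrictMono d := strictMono_nat_of_lt_succ fun k => by simp only [d]; omega
  have hd' : StrictMono d' :=
    strictMono_nat_of_lt_succ fun k => by simp only [d']; split_ifs <;> omega
  have hd_pat : fseq n ρ n (fun j => e (d (p j))) = fseq n ρ n (fun j => e (d (q j))) :=
    (hom x d hx hd).mp hx_pat
  have hd'_pat : fseq n ρ n (fun j => e (d' (p j))) = fseq n ρ n (fun j => e (d' (q j))) :=
    (hom x d' hx hd').mp hx_pat
  have hdq : fseq n ρ n (fun j => e (d (q j))) = fseq n ρ n (fun j => e (d' (q j))) :=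
    fseq_congr fun j hj => by simp [d, d', show q j ≠ p 0 from hQ j hj]
  have hincr : ∀ f : ℕ → ℕ, StrictMono f → IsIncrTuple (Set.range e) n fun j => e (f (p j)) :=
    fun f hf => ⟨fun j _ => ⟨_, rfl⟩, fun j hj => he (hf (hP j hj))⟩
  refine fseq_ne_of_head_ne hρ (v := fun j => e (d (p j))) (w := fun j => e (d' (p j)))
    (fun j hj hjn => by simp [d, d', (hp0 j hj hjn).ne']) (fun h => ?_) (fun j _ => he_lt _)
    (shiftLt_of_isIncrTuple hSI (hincr d hd)) (shiftLt_of_isIncrTuple hSI (hincr d' hd'))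
    (hd_pat.trans (hdq.trans hd'_pat.symm))
  have := he.injective h
  simp only [d, d', if_true] at this
  omega

theorem minDependentOn_range (hρ : IsRhoSystem n ρ) {e : ℕ → Ordinal} (he : StrictMono e)
    (he_lt : ∀ k, e k < omegaOrd n) (hSI : ∀ i < n, ShiftIncreasingOn n ρ i (Set.range e))
    {M : ℕ} (hM : 2 * (n + 1) ≤ M)
    (hom : ∀ P Q : Fin (n + 1) → Fin M, IsHomogeneousFor e (FseqPatternEq n ρ P Q)) :
    MinDependentOn n ρ (Set.range e) := by
  suffices key : ∀ v w, IsIncrTuple (Set.range e) n v → IsIncrTuple (Set.range e) n w →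
      v 0 < w 0 → fseq n ρ n v ≠ fseq n ρ n w by
    intro v w hv hw heq
    rcases lt_trichotomy (v 0) (w 0) with h | h | h
    · exact (key v w hv hw h heq).elim
    · exact h
    · exact (key w v hw hv h heq.symm).elim
  intro v w hv hw hlt heq
  obtain ⟨y, hy, hyv⟩ := hv.exists_strictMono_index he
  obtain ⟨z, hz, hzw⟩ := hw.exists_strictMono_index he
  obtain ⟨x, hx, P, Q, hPQ⟩ := exists_strictMono_merge hM y z
  have hyz : y 0 < z 0 := by
    rwa [← he.lt_iff_lt, ← hyv 0 (Nat.zero_le n), ← hzw 0 (Nat.zero_le n)]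
  refine not_fseqPatternEq_of_head_unshared hρ he he_lt hSI (hom P Q) (fun j hj => ?_)
    (fun j hj hQP => ?_) hx ?_
  · rw [← hx.lt_iff_lt, (hPQ j hj.le).1, (hPQ (j + 1) hj).1]
    exact hy j.lt_succ_self
  · have : z j = y 0 := by
      rw [← (hPQ j hj).2, ← (hPQ 0 (Nat.zero_le n)).1]
      exact congrArg x hQP
    exact (hyz.trans_le (hz.monotone (Nat.zero_le j))).ne' this
  · exact (fseq_congr fun j hj => (congrArg e (hPQ j hj).1).trans (hyv j hj).symm).trans
      (heq.trans (fseq_congr fun j hj => (hzw j hj).trans (congrArg e (hPQ j hj).2).symm))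

theorem veryLarge_memBn (hρ : IsRhoSystem n ρ) : VeryLarge (omegaOrd n) {s | memBn n ρ s} := by
  intro A hA_lt hA
  obtain ⟨e₀, he₀, he₀A⟩ := hA.exists_strictMono_mem
  let Φ : Fin n ⊕ (Fin (n + 1) → Fin (2 * (n + 1))) × (Fin (n + 1) → Fin (2 * (n + 1))) →
      (ℕ → Ordinal) → Prop :=
    Sum.elim (fun i => ShiftLt n ρ i) fun PQ => FseqPatternEq n ρ PQ.1 PQ.2
  have hΦ : ∀ k u u', (∀ j < 2 * (n + 1), u j = u' j) → (Φ k u ↔ Φ k u') := by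
    rintro (i | ⟨P, Q⟩) u u' h
    · exact shiftLt_congr fun j hj => h j (by omega)
    · simp only [Φ, Sum.elim_inr, FseqPatternEq]
      rw [fseq_congr fun j _ => h _ (P _).2, fseq_congr fun j _ => h _ (Q _).2]
  obtain ⟨φ, hφ, hom⟩ := exists_strictMono_isHomogeneousFor _ Φ hΦ e₀
  have he : StrictMono (e₀ ∘ φ) := he₀.comp hφ
  have he_lt : ∀ k, (e₀ ∘ φ) k < omegaOrd n := fun k => hA_lt (he₀A _)
  have hSI := shiftIncreasingOn_range hρ he he_lt fun i hi => hom (.inl ⟨i, hi⟩)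
  have hMD := minDependentOn_range hρ he he_lt hSI le_rfl fun P Q => hom (.inr (P, Q))
  refine ⟨_, Set.range_subset_iff.2 fun k => he₀A _, Set.infinite_range_of_injective he.injective,
    fun s hs => memBn_iff.2 ⟨fun a ha => ?_, hMD.mono hs, fun i hi => (hSI i hi).mono hs⟩⟩
  obtain ⟨k, rfl⟩ := hs ha
  exact he_lt k

end VeryLarge

section DeltaPosition

theorem enumOf_mem {s : Finset Ordinal} {j : ℕ} (h : j < s.card) : enumOf s j ∈ s := by
  rw [enumOf, List.getD_eq_getElem _ _ (by rwa [Finset.length_sort]), ← Finset.mem_sort (· ≤ ·)]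
  exact List.getElem_mem _

theorem enumOf_strictMonoOn (s : Finset Ordinal) : StrictMonoOn (enumOf s) (Set.Iio s.card) := by
  intro j hj k hk hjk
  have hj' : j < (s.sort (· ≤ ·)).length := by rw [Finset.length_sort]; exact hj
  have hk' : k < (s.sort (· ≤ ·)).length := by rw [Finset.length_sort]; exact hk
  rw [enumOf, enumOf, List.getD_eq_getElem _ _ hj', List.getD_eq_getElem _ _ hk']
  exact List.Pairwise.rel_get_of_lt (Finset.sortedLT_sort s).pairwise (Fin.mk_lt_mk.2 hjk)

theorem exists_enumOf {s : Finset Ordinal} {a : Ordinal} (h : a ∈ s) :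
    ∃ j < s.card, enumOf s j = a := by
  rw [← Finset.mem_sort (· ≤ ·), List.mem_iff_getElem] at h
  obtain ⟨j, hj, rfl⟩ := h
  exact ⟨j, by rwa [Finset.length_sort] at hj, by rw [enumOf, List.getD_eq_getElem _ _ hj]⟩

theorem exists_first_enumOf_ne {s t : Finset Ordinal} (hcard : s.card = t.card) (hst : s ≠ t) :
    ∃ K < s.card, enumOf s K ≠ enumOf t K ∧ ∀ j < K, enumOf s j = enumOf t j := by
  classical
  have hex : ∃ K, K < s.card ∧ enumOf s K ≠ enumOf t K := by
    by_contra! h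
    refine hst (Finset.ext fun a => ⟨fun ha => ?_, fun ha => ?_⟩)
    · obtain ⟨j, hj, rfl⟩ := exists_enumOf ha
      exact h j hj ▸ enumOf_mem (hcard ▸ hj)
    · obtain ⟨j, hj, rfl⟩ := exists_enumOf ha
      exact (h j (hcard ▸ hj)).symm ▸ enumOf_mem (hcard ▸ hj)
  refine ⟨Nat.find hex, (Nat.find_spec hex).1, (Nat.find_spec hex).2, fun j hj => ?_⟩
  by_contra hne
  exact (Nat.find_min' hex ⟨(hj.trans (Nat.find_spec hex).1), hne⟩).not_gt hj

theorem filter_lt_enumOf {s : Finset Ordinal} {K : ℕ} (hK : K < s.card) :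
    s.filter (· < enumOf s K) = (Finset.range K).image (enumOf s) := by
  ext a
  simp only [Finset.mem_filter, Finset.mem_image, Finset.mem_range]
  constructor
  · rintro ⟨ha, haK⟩
    obtain ⟨j, hj, rfl⟩ := exists_enumOf ha
    exact ⟨j, ((enumOf_strictMonoOn s).lt_iff_lt hj hK).1 haK, rfl⟩
  · rintro ⟨j, hj, rfl⟩
    exact ⟨enumOf_mem (hj.trans hK), enumOf_strictMonoOn s (hj.trans hK) hK hj⟩

theorem initSeg_filter_lt (s : Finset Ordinal) (c : Ordinal) : InitSeg (s.filter (· < c)) s := by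
  refine ⟨Finset.filter_subset _ _, fun a ha b hb => ?_⟩
  simp only [Finset.mem_sdiff, Finset.mem_filter, not_and, not_lt] at ha hb
  exact ha.2.trans_le (hb.2 hb.1)

theorem isIncrTuple_enumOf {s : Finset Ordinal} {m : ℕ} {g : ℕ → ℕ}
    (hg : ∀ j < m, g j < g (j + 1)) (hgm : g m < s.card) :
    IsIncrTuple s m fun j => enumOf s (g j) := by
  have hg_lt : ∀ j ≤ m, g j < s.card := fun j hj =>
    ((strictMonoOn_Iic_of_lt_succ hg).monotoneOn hj (Set.mem_Iic.2 le_rfl) hj).trans_lt hgm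
  exact ⟨fun j hj => enumOf_mem (hg_lt j hj), fun j hj =>
    enumOf_strictMonoOn s (hg_lt j hj.le) (hg_lt (j + 1) hj) (hg j hj)⟩

variable {n : ℕ} {ρ : ℕ → Ordinal → Ordinal → Ordinal}

def AgreesOnTuples (n : ℕ) (ρ : ℕ → Ordinal → Ordinal → Ordinal) (s t : Finset Ordinal) : Prop :=
  ∀ g : ℕ → ℕ, (∀ j, j < n → g j < g (j + 1)) → g n < s.card →
    fseq n ρ n (fun j => enumOf s (g j)) = fseq n ρ n (fun j => enumOf t (g j))

noncomputable def samePositionsAbove (s t : Finset Ordinal) (K : ℕ) : Finset ℕ :=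
  (Finset.range s.card).filter fun p => K < p ∧ enumOf s p = enumOf t p

noncomputable def displacedPositions (s t : Finset Ordinal) : Finset ℕ :=
  (Finset.range s.card).filter fun p => enumOf s p ∈ t ∧ enumOf s p ≠ enumOf t p

theorem card_samePositionsAbove_lt (hρ : IsRhoSystem n ρ) {s t : Finset Ordinal}
    (hs : memBn n ρ s) (ht : memBn n ρ t) (hcard : s.card = t.card)
    (hagree : AgreesOnTuples n ρ s t) {K : ℕ} (hK : K < s.card)
    (hKne : enumOf s K ≠ enumOf t K) : (samePositionsAbove s t K).card < n := by
  by_contra! hP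
  obtain ⟨h, hh, hhP⟩ := (samePositionsAbove s t K).exists_strictMono_image_Iio_card
  have hmem : ∀ j < n, K < h j ∧ h j < s.card ∧ enumOf s (h j) = enumOf t (h j) := by
    intro j hj
    have : h j ∈ (samePositionsAbove s t K : Set ℕ) := hhP ▸ ⟨j, Set.mem_Iio.2 (by omega), rfl⟩
    simp only [samePositionsAbove, Finset.coe_filter, Finset.mem_range, Set.mem_ofPred_eq] at this
    exact ⟨this.2.1, this.1, this.2.2⟩
  let g : ℕ → ℕ := fun j => if j = 0 then K else h (j - 1)
  have hg : ∀ j < n, g j < g (j + 1) := by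
    rintro (_ | j) hj
    · exact (hmem 0 hj).1
    · exact hh j.lt_succ_self
  have hgn : g n < s.card := by
    rcases n with _ | n
    · exact hK
    · exact (hmem n n.lt_succ_self).2.1
  obtain ⟨hs_lt, -, hs_SI⟩ := memBn_iff.1 hs
  obtain ⟨-, -, ht_SI⟩ := memBn_iff.1 ht
  have hv := isIncrTuple_enumOf hg hgn
  refine fseq_ne_of_head_ne hρ (fun j hj hjn => ?_) hKne (fun j hj => hs_lt _ (hv.1 j hj))
    (shiftLt_of_isIncrTuple hs_SI hv)
    (shiftLt_of_isIncrTuple ht_SI (isIncrTuple_enumOf hg (hcard ▸ hgn))) (hagree g hg hgn)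
  simp only [g, hj.ne', if_false]
  exact (hmem (j - 1) (by omega)).2.2

theorem card_displacedPositions_le {s t : Finset Ordinal} (ht : memBn n ρ t)
    (hcard : s.card = t.card) (hagree : AgreesOnTuples n ρ s t) :
    (displacedPositions s t).card ≤ n := by
  by_contra! hD
  obtain ⟨g, hg, hgD⟩ := (displacedPositions s t).exists_strictMono_image_Iio_card
  have hmem : ∀ j ≤ n, g j < s.card ∧ enumOf s (g j) ∈ t ∧ enumOf s (g j) ≠ enumOf t (g j) := by
    intro j hj
    have : g j ∈ (displacedPositions s t : Set ℕ) := hgD ▸ ⟨j, Set.mem_Iio.2 (by omega), rfl⟩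
    simpa only [displacedPositions, Finset.coe_filter, Finset.mem_range, Set.mem_ofPred_eq]
      using this
  have hg' : ∀ j < n, g j < g (j + 1) := fun j _ => hg j.lt_succ_self
  have hgn := (hmem n le_rfl).1
  have hv : IsIncrTuple t n fun j => enumOf s (g j) :=
    ⟨fun j hj => (hmem j hj).2.1, (isIncrTuple_enumOf hg' hgn).2⟩
  exact (hmem 0 (Nat.zero_le n)).2.2 ((memBn_iff.1 ht).2.1 _ _ hv
    (isIncrTuple_enumOf hg' (hcard ▸ hgn)) (hagree g hg' hgn))

theorem inter_sdiff_subset_image_enumOf {s t : Finset Ordinal} {K : ℕ}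
    (hKne : enumOf s K ≠ enumOf t K) :
    (s ∩ t) \ (Finset.range K).image (enumOf s) ⊆
      (samePositionsAbove s t K ∪ displacedPositions s t).image (enumOf s) := by
  intro a ha
  obtain ⟨hast, haI⟩ := Finset.mem_sdiff.1 ha
  obtain ⟨has, hat⟩ := Finset.mem_inter.1 hast
  obtain ⟨p, hp, rfl⟩ := exists_enumOf has
  have hKp : K ≤ p := by
    by_contra! hpK
    exact haI (Finset.mem_image_of_mem _ (Finset.mem_range.2 hpK))
  refine Finset.mem_image_of_mem _ ?_
  by_cases hpt : enumOf s p = enumOf t p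
  · exact Finset.mem_union_left _ (Finset.mem_filter.2 ⟨Finset.mem_range.2 hp,
      lt_of_le_of_ne hKp (by rintro rfl; exact hKne hpt), hpt⟩)
  · exact Finset.mem_union_right _ (Finset.mem_filter.2 ⟨Finset.mem_range.2 hp, hat, hpt⟩)

theorem deltaPos_of_agreesOnTuples (hρ : IsRhoSystem n ρ) {s t : Finset Ordinal}
    (hs : memBn n ρ s) (ht : memBn n ρ t) (hst : s ≠ t) (hcard : s.card = t.card)
    (hagree : AgreesOnTuples n ρ s t) : DeltaPos (2 * n - 1) s t := by
  obtain ⟨K, hK, hKne, hKeq⟩ := exists_first_enumOf_ne hcard hst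
  set I := (Finset.range K).image (enumOf s)
  have hIs : InitSeg I s := by
    have : s.filter (· < enumOf s K) = I := filter_lt_enumOf hK
    rw [← this]
    exact initSeg_filter_lt s _
  have hIt : InitSeg I t := by
    have : t.filter (· < enumOf t K) = I := (filter_lt_enumOf (hcard ▸ hK)).trans
      (Finset.image_congr fun j hj => (hKeq j (Finset.mem_range.1 hj)).symm)
    rw [← this]
    exact initSeg_filter_lt t _
  have hI : I ⊆ s ∩ t := Finset.subset_inter hIs.1 hIt.1
  have hJcard : ((s ∩ t) \ I).card ≤ 2 * n - 1 := by
    have hP := card_samePositionsAbove_lt hρ hs ht hcard hagree hK hKne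
    have hD := card_displacedPositions_le ht hcard hagree
    have hJ : (s ∩ t) \ I ⊆ _ := inter_sdiff_subset_image_enumOf hKne
    have := (Finset.card_le_card hJ).trans
      (Finset.card_image_le.trans (Finset.card_union_le _ _))
    omega
  refine ⟨I, (s ∩ t) \ I, hI, Finset.sdiff_subset, fun a ha b hb => hIs.2 a ha b ?_,
    (Finset.union_sdiff_of_subset hI).symm, hJcard, hIs, hIt⟩
  exact Finset.sdiff_subset_sdiff Finset.inter_subset_left subset_rfl hb

end DeltaPosition

theorem stmt7_general (n : ℕ) (ρ : ℕ → Ordinal → Ordinal → Ordinal)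
    (hρ : IsRhoSystem n ρ) :
    VeryLarge (omegaOrd n) {s | memBn n ρ s} ∧
    ∀ s t : Finset Ordinal, memBn n ρ s → memBn n ρ t → s ≠ t → s.card = t.card →
      (∀ g : ℕ → ℕ, (∀ j, j < n → g j < g (j + 1)) → g n < s.card →
        fseq n ρ n (fun j => enumOf s (g j)) = fseq n ρ n (fun j => enumOf t (g j))) →
      DeltaPos (2 * n - 1) s t :=
  ⟨veryLarge_memBn hρ, fun _ _ hs ht hst hcard hagree =>
    deltaPos_of_agreesOnTuples hρ hs ht hst hcard hagree⟩

/-- The family `B_n` is very-large, and any two distinct members of `B_n` of the same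
cardinality on which `f_n` agrees on corresponding `(n+1)`-subsets are in
`(2n-1)`-Δ-position. -/
theorem stmt7 (n : ℕ) (hn : 1 ≤ n) (ρ : ℕ → Ordinal → Ordinal → Ordinal)
    (hρ : IsRhoSystem n ρ) :
    VeryLarge (omegaOrd n) {s | memBn n ρ s} ∧
    ∀ s t : Finset Ordinal, memBn n ρ s → memBn n ρ t → s ≠ t → s.card = t.card →
      (∀ g : ℕ → ℕ, (∀ j, j < n → g j < g (j + 1)) → g n < s.card →
        fseq n ρ n (fun j => enumOf s (g j)) = fseq n ρ n (fun j => enumOf t (g j))) →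
      DeltaPos (2 * n - 1) s t :=
  stmt7_general n ρ hρ
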